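/- Let 𝓛 be an upward-closed collection of subsets of K (L ∈ 𝓛 and L ⊆ L' ⊆ K imply L' ∈ 𝓛) such that every support in 𝓛 is positively winning for player 2 in the original game. Then every support that is positively winning for player 2 in the 𝓛-game is positively winning for player 2 in the original game as well. -/

import Mathlib

open scoped Classical

noncomputable section

/-- A probability distribution on a finite type, given by a nonnegative
real-valued density summing to `1`. -/
structure FDist (X : Type*) [Fintype X] where
  f : X → ℝ
  nonneg : ∀ x, 0 ≤ f x
  sum_one : ∑ x, f x = 1

/-- The support of a distribution: the set of points with positive probability. -/
def FDist.support {X : Type*} [Fintype X] (δ : FDist X) : Finset X :=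
  Finset.univ.filter fun x => 0 < δ.f x

/-- The uniform distribution on a nonempty finite set. -/
def uniform {X : Type*} [Fintype X] (L : Finset X) (hL : L.Nonempty) : FDist X where
  f x := if x ∈ L then (L.card : ℝ)⁻¹ else 0
  nonneg x := by split_ifs <;> positivity
  sum_one := by
    rw [Finset.sum_ite_mem, Finset.univ_inter, Finset.sum_const, nsmul_eq_mul,
      mul_inv_cancel₀]
    exact_mod_cast (Finset.card_pos.mpr hL).ne'

/-- Uniform distribution on `L`, defaulting to the uniform distribution on the
whole type when `L` is empty. -/
def uniformD {X : Type*} [Fintype X] [Nonempty X] (L : Finset X) : FDist X :=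
  if h : L.Nonempty then uniform L h else uniform Finset.univ Finset.univ_nonempty

/-- The Dirac distribution on a point. -/
def dirac {X : Type*} [Fintype X] (x : X) : FDist X where
  f y := if y = x then 1 else 0
  nonneg y := by by_cases h : y = x <;> simp [h]
  sum_one := by simp

/-- A stochastic game with partial observation on both sides and a reachability
objective for player 1: states `K`, actions `I`, `J`, signals `C`, `D`, target
states `T`, transition probabilities `p`, and actions encoded in signals via
`act₁`, `act₂`. -/
structure Game (K I J C D : Type*) [Fintype K] [Fintype I] [Fintype J] [Fintype C] [Fintype D] where
  T : Finset K
  p : K → I → J → C × D × K → ℝ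
  p_nonneg : ∀ k i j x, 0 ≤ p k i j x
  p_sum : ∀ k i j, ∑ x : C × D × K, p k i j x = 1
  act₁ : C → I
  act₂ : D → J
  act_compat : ∀ k i j c d l, 0 < p k i j (c, d, l) → i = act₁ c ∧ j = act₂ d

/-- A (behavioral) strategy of player 1: a distribution on actions for each
finite sequence of received signals. -/
abbrev Strategy1 (I C : Type*) [Fintype I] : Type _ := List C → FDist I

/-- A (behavioral) strategy of player 2. -/
abbrev Strategy2 (J D : Type*) [Fintype J] : Type _ := List D → FDist J

/-- A play with `n+1` states: the initial state followed by `n` steps, each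
consisting of a signal for player 1, a signal for player 2 and the next state. -/
structure Hist (K C D : Type*) (n : ℕ) where
  first : K
  steps : Fin n → C × D × K

instance (K C D : Type*) [Fintype K] [Fintype C] [Fintype D] (n : ℕ) :
    Fintype (Hist K C D n) :=
  Fintype.ofEquiv (K × (Fin n → C × D × K))
    { toFun := fun x => ⟨x.1, x.2⟩
      invFun := fun h => (h.first, h.steps)
      left_inv := fun _ => rfl
      right_inv := fun _ => rfl }

namespace Hist

variable {K C D : Type*}

/-- The last state of a play. -/
def last : ∀ {n : ℕ}, Hist K C D n → K
  | 0, h => h.first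
  | n + 1, h => (h.steps (Fin.last n)).2.2

/-- The play obtained by removing the last step. -/
def init {n : ℕ} (h : Hist K C D (n + 1)) : Hist K C D n :=
  ⟨h.first, fun m => h.steps m.castSucc⟩

/-- The `m`-th state of a play, `0`-indexed: `state h 0` is the initial state
(called `k₁` in `1`-indexed notation). -/
def state {n : ℕ} (h : Hist K C D n) (m : Fin (n + 1)) : K :=
  if hm : m.val = 0 then h.first
  else (h.steps ⟨m.val - 1, by have := m.isLt; omega⟩).2.2

/-- The sequence of signals received by player 1 along the play. -/
def sig1 {n : ℕ} (h : Hist K C D n) : List C := List.ofFn fun m => (h.steps m).1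

/-- The sequence of signals received by player 2 along the play. -/
def sig2 {n : ℕ} (h : Hist K C D n) : List D := List.ofFn fun m => (h.steps m).2.1

/-- The play visits the target set `T`. -/
def visits (T : Finset K) {n : ℕ} (h : Hist K C D n) : Prop :=
  ∃ m : Fin (n + 1), h.state m ∈ T

end Hist

namespace Game

variable {K I J C D : Type*} [Fintype K] [Fintype I] [Fintype J] [Fintype C] [Fintype D]

/-- The probability of a given play of `n` steps, under initial distribution `δ`
and strategies `σ`, `τ`. -/
def playProb (G : Game K I J C D) (δ : FDist K) (σ : Strategy1 I C) (τ : Strategy2 J D) :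
    ∀ n : ℕ, Hist K C D n → ℝ
  | 0, h => δ.f h.first
  | n + 1, h =>
      G.playProb δ σ τ n h.init *
        ∑ i : I, ∑ j : J,
          (σ h.init.sig1).f i * (τ h.init.sig2).f j *
            G.p h.init.last i j (h.steps (Fin.last n))

/-- The probability that a play with `n+1` states visits the target set. -/
def reachProb (G : Game K I J C D) (δ : FDist K) (σ : Strategy1 I C)
    (τ : Strategy2 J D) (n : ℕ) : ℝ :=
  ∑ h : Hist K C D n, if h.visits G.T then G.playProb δ σ τ n h else 0

/-- The reachability probability `γ₁(δ,σ,τ)`: the supremum over horizons of the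
probability that the play visits the target set. -/
def val (G : Game K I J C D) (δ : FDist K) (σ : Strategy1 I C) (τ : Strategy2 J D) : ℝ :=
  ⨆ n : ℕ, G.reachProb δ σ τ n

/-- `δ` is almost-surely winning for player 1. -/
def AlmostSureWin1 (G : Game K I J C D) (δ : FDist K) : Prop :=
  ∃ σ, ∀ τ, G.val δ σ τ = 1

/-- `δ` is positively winning for player 1. -/
def PositiveWin1 (G : Game K I J C D) (δ : FDist K) : Prop :=
  ∃ σ, ∀ τ, 0 < G.val δ σ τ

/-- `δ` is positively winning for player 2. -/
def PositiveWin2 (G : Game K I J C D) (δ : FDist K) : Prop :=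
  ∃ τ, ∀ σ, G.val δ σ τ < 1

/-- `δ` is surely (equivalently here, almost-surely) winning for player 2. -/
def SureWin2 (G : Game K I J C D) (δ : FDist K) : Prop :=
  ∃ τ, ∀ σ, G.val δ σ τ = 0

/-- One-step belief operator of player 1. -/
def B1 (G : Game K I J C D) (L : Finset K) (c : C) : Finset K :=
  Finset.univ.filter fun k => ∃ l ∈ L, ∃ d : D, 0 < G.p l (G.act₁ c) (G.act₂ d) (c, d, k)

/-- One-step belief operator of player 2. -/
def B2 (G : Game K I J C D) (L : Finset K) (d : D) : Finset K :=
  Finset.univ.filter fun k => ∃ l ∈ L, ∃ c : C, 0 < G.p l (G.act₁ c) (G.act₂ d) (c, d, k)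

/-- Belief of player 1 after a sequence of signals. -/
def B1seq (G : Game K I J C D) (L : Finset K) (cs : List C) : Finset K := cs.foldl G.B1 L

/-- Belief of player 2 after a sequence of signals. -/
def B2seq (G : Game K I J C D) (L : Finset K) (ds : List D) : Finset K := ds.foldl G.B2 L

/-- One-step pessimistic belief operator of player 1. -/
def B1p (G : Game K I J C D) (L : Finset K) (c : C) : Finset K := G.B1 (L \ G.T) c

/-- One-step pessimistic belief operator of player 2. -/
def B2p (G : Game K I J C D) (L : Finset K) (d : D) : Finset K := G.B2 (L \ G.T) d

/-- Pessimistic belief of player 1 after a sequence of signals. -/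
def B1pseq (G : Game K I J C D) (L : Finset K) (cs : List C) : Finset K := cs.foldl G.B1p L

/-- Pessimistic belief of player 2 after a sequence of signals. -/
def B2pseq (G : Game K I J C D) (L : Finset K) (ds : List D) : Finset K := ds.foldl G.B2p L

/-- The operator `Φ` on collections of subsets of `K ∖ T`. -/
def Phi (G : Game K I J C D) (𝓛 : Set (Finset K)) : Set (Finset K) :=
  {L | L ∈ 𝓛 ∧ L ∩ G.T = ∅ ∧ ∃ j : J, ∀ d : D, G.act₂ d = j → G.B2 L d ∈ 𝓛}

theorem Phi_mono (G : Game K I J C D) : Monotone G.Phi := by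
  intro A B hAB L hL
  obtain ⟨h1, h2, j, hj⟩ := hL
  exact ⟨hAB h1, h2, j, fun d hd => hAB (hj d hd)⟩

/-- `𝓛_∞`, the greatest fixpoint of `Φ`. -/
def Linf (G : Game K I J C D) : Set (Finset K) :=
  OrderHom.gfp ⟨G.Phi, G.Phi_mono⟩

/-- The winning condition of the `𝓛`-game for player 1, on a play with initial
support `L`: some state `k_m` is a target state and all earlier pessimistic
beliefs of player 1 avoid `𝓛`. -/
def LWin (G : Game K I J C D) (𝓛 : Set (Finset K)) (L : Finset K) {n : ℕ}
    (h : Hist K C D n) : Prop :=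
  ∃ m : Fin (n + 1), h.state m ∈ G.T ∧
    ∀ r : ℕ, 1 ≤ r → r ≤ m.val → G.B1pseq L (h.sig1.take r) ∉ 𝓛

/-- The payoff `γ₁^𝓛(δ,σ,τ)` of player 1 in the `𝓛`-game, for an initial
distribution `δ` with support `L`. -/
def Lval (G : Game K I J C D) (𝓛 : Set (Finset K)) (L : Finset K) (δ : FDist K)
    (σ : Strategy1 I C) (τ : Strategy2 J D) : ℝ :=
  ⨆ n : ℕ, ∑ h : Hist K C D n, if G.LWin 𝓛 L h then G.playProb δ σ τ n h else 0

end Game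

/-- The uniformly random strategy `σ_R` of player 1. -/
def randomStrat (I C : Type*) [Fintype I] [Nonempty I] : Strategy1 I C :=
  fun _ => uniform Finset.univ Finset.univ_nonempty

/-!
Player 2 mixes the strategy `τ₀` of the `𝓛`-game with, for every support `L' ∈ 𝓛` and every
time `t`, the strategy that plays uniformly at random for `t` steps and then a strategy
positively winning from `L'`; by Kuhn's theorem the countable mixture is a behavioral strategy
giving each component a positive weight. Fix a strategy of player 1. If some finite play of
positive probability brings the pessimistic belief `L'` of player 1 into `𝓛`, then under the
component switching at that time the belief is exact (uniform play makes all of it reachable),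
so the component winning from `L'` keeps the play out of `T` with positive probability. If no
such play exists, every play reaching `T` is won in the `𝓛`-game, whose value against `τ₀` is
below `1`. Either way a component of positive weight bounds the reachability value below `1`.
-/

theorem FDist.f_le_one {X : Type*} [Fintype X] (δ : FDist X) (x : X) : δ.f x ≤ 1 :=
  δ.sum_one ▸ Finset.single_le_sum (fun y _ => δ.nonneg y) (Finset.mem_univ x)

theorem Finset.exists_pos_le {α : Type*} (S : Finset α) {f : α → ℝ} (hf : ∀ a ∈ S, 0 < f a) :
    ∃ c > 0, ∀ a ∈ S, c ≤ f a := by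
  rcases S.eq_empty_or_nonempty with rfl | hS
  · exact ⟨1, one_pos, by simp⟩
  · obtain ⟨a, ha, hmin⟩ := S.exists_min_image f hS
    exact ⟨f a, hf a ha, hmin⟩

theorem uniform_f_pos {X : Type*} [Fintype X] {L : Finset X} (hL : L.Nonempty) {x : X}
    (hx : x ∈ L) : 0 < (uniform L hL).f x := by
  have : (0 : ℝ) < L.card := by exact_mod_cast hL.card_pos
  simpa [uniform, hx] using this

theorem uniform_f_of_notMem {X : Type*} [Fintype X] {L : Finset X} (hL : L.Nonempty) {x : X}
    (hx : x ∉ L) : (uniform L hL).f x = 0 := if_neg hx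

section RealizationWeight

variable {J D : Type*} [Fintype J] (act : D → J)

def realizationWeight : Strategy2 J D → List D → ℝ
  | _, [] => 1
  | τ, d :: ds => (τ []).f (act d) * realizationWeight (fun l => τ (d :: l)) ds

@[simp] theorem realizationWeight_nil (τ : Strategy2 J D) : realizationWeight act τ [] = 1 := rfl

theorem realizationWeight_cons (τ : Strategy2 J D) (d : D) (ds : List D) :
    realizationWeight act τ (d :: ds) =
      (τ []).f (act d) * realizationWeight act (fun l => τ (d :: l)) ds := rfl

theorem realizationWeight_append_singleton (ds : List D) (d : D) (τ : Strategy2 J D) :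
    realizationWeight act τ (ds ++ [d]) = realizationWeight act τ ds * (τ ds).f (act d) := by
  induction ds generalizing τ with
  | nil => simp [realizationWeight_cons]
  | cons e ds ih => simp only [List.cons_append, realizationWeight_cons, ih, mul_assoc]

theorem realizationWeight_nonneg (τ : Strategy2 J D) (ds : List D) :
    0 ≤ realizationWeight act τ ds := by
  induction ds generalizing τ with
  | nil => exact zero_le_one
  | cons d ds ih => exact mul_nonneg ((τ []).nonneg _) (ih _)

theorem realizationWeight_le_one (τ : Strategy2 J D) (ds : List D) :
    realizationWeight act τ ds ≤ 1 := by
  induction ds generalizing τ with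
  | nil => exact le_rfl
  | cons d ds ih =>
    exact mul_le_one₀ ((τ []).f_le_one _) (realizationWeight_nonneg act _ _) (ih _)

theorem realizationWeight_pos {τ : Strategy2 J D} {ds : List D}
    (hτ : ∀ l : List D, l.length < ds.length → ∀ j, 0 < (τ l).f j) :
    0 < realizationWeight act τ ds := by
  induction ds generalizing τ with
  | nil => exact zero_lt_one
  | cons d ds ih =>
    exact mul_pos (hτ [] (by simp) _) (ih fun l hl j => hτ (d :: l) (by simpa using hl) j)

def mixtureWeight (τ : ℕ → Strategy2 J D) (ds : List D) : ℝ :=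
  ∑' n, (1 / 2 : ℝ) ^ n * realizationWeight act (τ n) ds

theorem summable_geometric_mul {f : ℕ → ℝ} (h0 : ∀ n, 0 ≤ f n) (h1 : ∀ n, f n ≤ 1) :
    Summable fun n => (1 / 2 : ℝ) ^ n * f n :=
  summable_geometric_two.of_nonneg_of_le (fun n => mul_nonneg (by positivity) (h0 n))
    fun n => mul_le_of_le_one_right (by positivity) (h1 n)

theorem summable_mixtureWeight (τ : ℕ → Strategy2 J D) (ds : List D) :
    Summable fun n => (1 / 2 : ℝ) ^ n * realizationWeight act (τ n) ds :=
  summable_geometric_mul (fun _ => realizationWeight_nonneg act _ _)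
    fun _ => realizationWeight_le_one act _ _

theorem summable_mixtureWeight_mul (τ : ℕ → Strategy2 J D) (ds : List D) (j : J) :
    Summable fun n => (1 / 2 : ℝ) ^ n * (realizationWeight act (τ n) ds * (τ n ds).f j) :=
  summable_geometric_mul
    (fun n => mul_nonneg (realizationWeight_nonneg act _ _) ((τ n ds).nonneg j))
    fun n => mul_le_one₀ (realizationWeight_le_one act _ _) ((τ n ds).nonneg j)
      ((τ n ds).f_le_one j)

theorem mixtureWeight_nonneg (τ : ℕ → Strategy2 J D) (ds : List D) :
    0 ≤ mixtureWeight act τ ds :=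
  tsum_nonneg fun n => mul_nonneg (by positivity) (realizationWeight_nonneg act _ _)

theorem mixtureWeight_append_singleton (τ : ℕ → Strategy2 J D) (ds : List D) (d : D) :
    mixtureWeight act τ (ds ++ [d]) =
      ∑' n, (1 / 2 : ℝ) ^ n * (realizationWeight act (τ n) ds * (τ n ds).f (act d)) := by
  simp only [mixtureWeight, realizationWeight_append_singleton]

theorem sum_mixtureWeight_mul (τ : ℕ → Strategy2 J D) (ds : List D) :
    ∑ j, ∑' n, (1 / 2 : ℝ) ^ n * (realizationWeight act (τ n) ds * (τ n ds).f j) =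
      mixtureWeight act τ ds := by
  rw [← Summable.tsum_finsetSum fun j _ => summable_mixtureWeight_mul act τ ds j]
  simp only [← Finset.mul_sum, (τ _ ds).sum_one, mul_one, mixtureWeight]

/-- Kuhn's construction of a behavioral strategy equivalent to the mixture of the `τ n` with
weights `2⁻ⁿ`: after `ds`, action `j` gets the conditional probability of `j` given that the
mixture produced `ds`. Where `ds` has weight `0` the choice is irrelevant. -/
def mixture (τ : ℕ → Strategy2 J D) : Strategy2 J D := fun ds =>
  if h : mixtureWeight act τ ds = 0 then τ 0 ds else
    { f := fun j => (∑' n, (1 / 2 : ℝ) ^ n * (realizationWeight act (τ n) ds * (τ n ds).f j)) /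
        mixtureWeight act τ ds
      nonneg := fun j => div_nonneg (tsum_nonneg fun n => mul_nonneg (by positivity)
        (mul_nonneg (realizationWeight_nonneg act _ _) ((τ n ds).nonneg j)))
        (mixtureWeight_nonneg act τ ds)
      sum_one := by rw [← Finset.sum_div, sum_mixtureWeight_mul, div_self h] }

theorem mixtureWeight_append_singleton_le (τ : ℕ → Strategy2 J D) (ds : List D) (d : D) :
    mixtureWeight act τ (ds ++ [d]) ≤ mixtureWeight act τ ds := by
  rw [mixtureWeight_append_singleton]
  refine (summable_mixtureWeight_mul act τ ds _).tsum_le_tsum (fun n => ?_)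
    (summable_mixtureWeight act τ ds)
  exact mul_le_mul_of_nonneg_left (mul_le_of_le_one_right (realizationWeight_nonneg act _ _)
    ((τ n ds).f_le_one _)) (by positivity)

theorem realizationWeight_mixture (τ : ℕ → Strategy2 J D) (ds : List D) :
    2 * realizationWeight act (mixture act τ) ds = mixtureWeight act τ ds := by
  induction ds using List.reverseRecOn with
  | nil => simp only [realizationWeight_nil, mixtureWeight, mul_one, tsum_geometric_two]
  | append_singleton ds d ih =>
    rw [realizationWeight_append_singleton, ← mul_assoc, ih, mixture]
    split_ifs with h
    · rw [h, zero_mul]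
      exact le_antisymm (h ▸ mixtureWeight_append_singleton_le act τ ds d)
        (mixtureWeight_nonneg act τ _) |>.symm
    · rw [mixtureWeight_append_singleton]
      exact mul_div_cancel₀ _ h

theorem realizationWeight_le_mixture (τ : ℕ → Strategy2 J D) (n : ℕ) (ds : List D) :
    (1 / 2 : ℝ) ^ (n + 1) * realizationWeight act (τ n) ds ≤
      realizationWeight act (mixture act τ) ds := by
  have h := (summable_mixtureWeight act τ ds).le_tsum n
    fun _ _ => mul_nonneg (by positivity) (realizationWeight_nonneg act _ _)
  rw [← mixtureWeight, ← realizationWeight_mixture] at h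
  rw [pow_succ]
  linarith

theorem exists_strategy_dominating {ι : Type*} [Countable ι] [Nonempty ι]
    (τ : ι → Strategy2 J D) :
    ∃ τ' : Strategy2 J D, ∀ i, ∃ c > 0, ∀ ds,
      c * realizationWeight act (τ i) ds ≤ realizationWeight act τ' ds := by
  obtain ⟨e, he⟩ := exists_surjective_nat ι
  refine ⟨mixture act (τ ∘ e), fun i => ?_⟩
  obtain ⟨n, rfl⟩ := he i
  exact ⟨_, by positivity, realizationWeight_le_mixture act (τ ∘ e) n⟩

end RealizationWeight

section SwitchStrategy

variable {J D : Type*} [Fintype J] [Nonempty J]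

def switchStrategy (θ : Strategy2 J D) (t : ℕ) : Strategy2 J D := fun ds =>
  if ds.length < t then uniform Finset.univ Finset.univ_nonempty else θ (ds.drop t)

theorem realizationWeight_switchStrategy_pos (act : D → J) (θ : Strategy2 J D) {t : ℕ}
    {ds : List D} (hds : ds.length ≤ t) : 0 < realizationWeight act (switchStrategy θ t) ds :=
  realizationWeight_pos act fun l hl j => by
    rw [switchStrategy, if_pos (by omega)]
    exact uniform_f_pos _ (Finset.mem_univ j)

theorem switchStrategy_append (θ : Strategy2 J D) {t : ℕ} {ds : List D} (hds : ds.length = t) :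
    (fun l => switchStrategy θ t (ds ++ l)) = θ := by
  subst hds
  funext l
  simp [switchStrategy]

end SwitchStrategy

namespace Hist

variable {K C D : Type*} {n t s : ℕ}

def snoc (w : Hist K C D n) (x : C × D × K) : Hist K C D (n + 1) :=
  ⟨w.first, Fin.snoc w.steps x⟩

@[simp] theorem init_snoc (w : Hist K C D n) (x : C × D × K) : (w.snoc x).init = w := by
  simp [snoc, init]

@[simp] theorem snoc_steps_last (w : Hist K C D n) (x : C × D × K) :
    (w.snoc x).steps (Fin.last n) = x := by
  simp [snoc]

@[simp] theorem last_snoc (w : Hist K C D n) (x : C × D × K) : (w.snoc x).last = x.2.2 :=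
  congrArg (fun y => y.2.2) (snoc_steps_last w x)

theorem snoc_init (h : Hist K C D (n + 1)) : h.init.snoc (h.steps (Fin.last n)) = h :=
  congrArg (Hist.mk h.first) (Fin.snoc_init_self h.steps)

theorem sig1_snoc (w : Hist K C D n) (x : C × D × K) : (w.snoc x).sig1 = w.sig1 ++ [x.1] := by
  simp only [sig1, snoc, List.ofFn_succ', Fin.snoc_castSucc, Fin.snoc_last, List.concat_eq_append]

theorem sig2_snoc (w : Hist K C D n) (x : C × D × K) : (w.snoc x).sig2 = w.sig2 ++ [x.2.1] := by
  simp only [sig2, snoc, List.ofFn_succ', Fin.snoc_castSucc, Fin.snoc_last, List.concat_eq_append]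

@[simp] theorem length_sig1 (h : Hist K C D n) : h.sig1.length = n := by simp [sig1]

@[simp] theorem length_sig2 (h : Hist K C D n) : h.sig2.length = n := by simp [sig2]

theorem state_last (h : Hist K C D n) : h.state (Fin.last n) = h.last := by
  cases n with
  | zero => rfl
  | succ n => exact dif_neg (Nat.succ_ne_zero n)

theorem state_snoc_castSucc (w : Hist K C D n) (x : C × D × K) (i : Fin (n + 1)) :
    (w.snoc x).state i.castSucc = w.state i := by
  simp only [state, Fin.val_castSucc]
  split_ifs with hi
  · rfl
  · exact congrArg (fun y => y.2.2) (Fin.snoc_castSucc (α := fun _ => C × D × K)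
      (i := (⟨i - 1, by have := i.isLt; omega⟩ : Fin n)) ..)

theorem state_snoc_last (w : Hist K C D n) (x : C × D × K) :
    (w.snoc x).state (Fin.last (n + 1)) = x.2.2 := by
  rw [state_last, last_snoc]

theorem visits_of_last_mem {T : Finset K} (h : Hist K C D n) (hT : h.last ∈ T) : h.visits T :=
  ⟨Fin.last n, by rwa [state_last]⟩

theorem visits_of_first_mem {T : Finset K} (h : Hist K C D n) (hT : h.first ∈ T) : h.visits T :=
  ⟨0, hT⟩

theorem visits_zero_iff {T : Finset K} (h : Hist K C D 0) : h.visits T ↔ h.first ∈ T :=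
  ⟨fun ⟨m, hm⟩ => by rwa [Fin.fin_one_eq_zero m] at hm, h.visits_of_first_mem⟩

theorem visits_snoc {T : Finset K} (w : Hist K C D n) (x : C × D × K) :
    (w.snoc x).visits T ↔ w.visits T ∨ x.2.2 ∈ T := by
  constructor
  · rintro ⟨m, hm⟩
    induction m using Fin.lastCases with
    | last => exact .inr (by rwa [state_snoc_last] at hm)
    | cast m => exact .inl ⟨m, by rwa [state_snoc_castSucc] at hm⟩
  · rintro (⟨m, hm⟩ | hx)
    · exact ⟨m.castSucc, by rwa [state_snoc_castSucc]⟩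
    · exact ⟨Fin.last _, by rwa [state_snoc_last]⟩

def snocEquiv (K C D : Type*) (n : ℕ) : Hist K C D n × (C × D × K) ≃ Hist K C D (n + 1) where
  toFun wx := snoc wx.1 wx.2
  invFun h := (h.init, h.steps (Fin.last n))
  left_inv wx := by simp
  right_inv := snoc_init

def firstStepsEquiv (K C D : Type*) (n : ℕ) : K × (Fin n → C × D × K) ≃ Hist K C D n where
  toFun x := ⟨x.1, x.2⟩
  invFun h := (h.first, h.steps)

def append (w : Hist K C D t) (v : Fin s → C × D × K) : Hist K C D (t + s) :=
  ⟨w.first, Fin.append w.steps v⟩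

theorem append_zero (w : Hist K C D t) (v : Fin 0 → C × D × K) : w.append v = w := by
  obtain ⟨f, st⟩ := w
  simp only [append, Subsingleton.elim v Fin.elim0, Fin.append_elim0]
  rfl

theorem append_snoc (w : Hist K C D t) (v : Fin s → C × D × K) (x : C × D × K) :
    w.append (Fin.snoc v x) = (w.append v).snoc x := by
  simp [append, snoc, Fin.append_snoc]

theorem sig1_append (w : Hist K C D t) (v : Fin s → C × D × K) :
    (w.append v).sig1 = w.sig1 ++ (⟨w.last, v⟩ : Hist K C D s).sig1 := by
  simp [sig1, append, List.ofFn_add, Fin.append_right]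

theorem sig2_append (w : Hist K C D t) (v : Fin s → C × D × K) :
    (w.append v).sig2 = w.sig2 ++ (⟨w.last, v⟩ : Hist K C D s).sig2 := by
  simp [sig2, append, List.ofFn_add, Fin.append_right]

theorem last_append (w : Hist K C D t) (v : Fin s → C × D × K) :
    (w.append v).last = (⟨w.last, v⟩ : Hist K C D s).last := by
  cases s with
  | zero => rw [append_zero]; rfl
  | succ s =>
    show (Fin.append w.steps v (Fin.natAdd t (Fin.last s))).2.2 = _
    rw [Fin.append_right]
    rfl

theorem visits_append {T : Finset K} (w : Hist K C D t) (v : Fin s → C × D × K) :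
    (w.append v).visits T ↔ w.visits T ∨ (⟨w.last, v⟩ : Hist K C D s).visits T := by
  induction s with
  | zero =>
    rw [append_zero]
    exact ⟨.inl, fun h => h.elim id fun hv => visits_of_last_mem w (visits_zero_iff _ |>.1 hv)⟩
  | succ s ih =>
    rw [← Fin.snoc_init_self v, append_snoc, visits_snoc, ih]
    exact (or_assoc).trans (or_congr_right (visits_snoc (w := ⟨w.last, Fin.init v⟩) _).symm)

def appendEquiv (K C D : Type*) (t s : ℕ) :
    Hist K C D t × (Fin s → C × D × K) ≃ Hist K C D (t + s) where
  toFun wv := append wv.1 wv.2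
  invFun h := (⟨h.first, fun i => h.steps (Fin.castAdd s i)⟩, fun i => h.steps (Fin.natAdd t i))
  left_inv wv := by simp [append, Fin.append_left, Fin.append_right]
  right_inv h := by simp [append, Fin.append_castAdd_natAdd]

variable [Fintype K] [Fintype C] [Fintype D] {M : Type*} [AddCommMonoid M]

theorem sum_succ (f : Hist K C D (n + 1) → M) :
    ∑ h, f h = ∑ w : Hist K C D n, ∑ x, f (w.snoc x) := by
  rw [← (snocEquiv K C D n).sum_comp, Fintype.sum_prod_type]
  rfl

theorem sum_first_steps (f : Hist K C D n → M) : ∑ h, f h = ∑ k, ∑ v, f ⟨k, v⟩ := by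
  rw [← (firstStepsEquiv K C D n).sum_comp, Fintype.sum_prod_type]
  rfl

theorem sum_append (f : Hist K C D (t + s) → M) :
    ∑ h, f h = ∑ w : Hist K C D t, ∑ v, f (w.append v) := by
  rw [← (appendEquiv K C D t s).sum_comp, Fintype.sum_prod_type]
  rfl

end Hist

namespace Game

variable {K I J C D : Type*} [Fintype K] [Fintype I] [Fintype J] [Fintype C] [Fintype D]
  (G : Game K I J C D) {n t s : ℕ}

theorem p_eq_zero_of_ne {k l : K} {i : I} {j : J} {c : C} {d : D}
    (h : i ≠ G.act₁ c ∨ j ≠ G.act₂ d) : G.p k i j (c, d, l) = 0 := by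
  by_contra hne
  obtain ⟨h1, h2⟩ := G.act_compat k i j c d l ((G.p_nonneg k i j _).lt_of_ne' hne)
  exact h.elim (· h1) (· h2)

theorem sum_step (k : K) (α : FDist I) (β : FDist J) (x : C × D × K) :
    ∑ i, ∑ j, α.f i * β.f j * G.p k i j x =
      α.f (G.act₁ x.1) * β.f (G.act₂ x.2.1) * G.p k (G.act₁ x.1) (G.act₂ x.2.1) x := by
  obtain ⟨c, d, l⟩ := x
  rw [Fintype.sum_eq_single (G.act₁ c) fun i hi => Finset.sum_eq_zero fun j _ => by
    rw [G.p_eq_zero_of_ne (.inl hi), mul_zero]]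
  exact Fintype.sum_eq_single (G.act₂ d) fun j hj => by rw [G.p_eq_zero_of_ne (.inr hj), mul_zero]

theorem sum_sum_step (k : K) (α : FDist I) (β : FDist J) :
    ∑ x, ∑ i, ∑ j, α.f i * β.f j * G.p k i j x = 1 := by
  simp only [Finset.sum_comm (γ := C × D × K), ← Finset.mul_sum, G.p_sum, mul_one,
    α.sum_one, β.sum_one]

theorem playProb_snoc (δ : FDist K) (σ : Strategy1 I C) (τ : Strategy2 J D) (w : Hist K C D n)
    (x : C × D × K) :
    G.playProb δ σ τ (n + 1) (w.snoc x) = G.playProb δ σ τ n w *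
      ((σ w.sig1).f (G.act₁ x.1) * (τ w.sig2).f (G.act₂ x.2.1) *
        G.p w.last (G.act₁ x.1) (G.act₂ x.2.1) x) := by
  rw [playProb, Hist.init_snoc, Hist.snoc_steps_last, sum_step]

theorem playProb_nonneg (δ : FDist K) (σ : Strategy1 I C) (τ : Strategy2 J D)
    (h : Hist K C D n) : 0 ≤ G.playProb δ σ τ n h := by
  induction n with
  | zero => exact δ.nonneg _
  | succ n ih =>
    exact mul_nonneg (ih _) (Finset.sum_nonneg fun _ _ => Finset.sum_nonneg fun _ _ =>
      mul_nonneg (mul_nonneg ((σ _).nonneg _) ((τ _).nonneg _)) (G.p_nonneg _ _ _ _))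

theorem sum_playProb_snoc (δ : FDist K) (σ : Strategy1 I C) (τ : Strategy2 J D)
    (w : Hist K C D n) : ∑ x, G.playProb δ σ τ (n + 1) (w.snoc x) = G.playProb δ σ τ n w := by
  simp only [playProb, Hist.init_snoc, Hist.snoc_steps_last, ← Finset.mul_sum, sum_sum_step,
    mul_one]

theorem sum_playProb (δ : FDist K) (σ : Strategy1 I C) (τ : Strategy2 J D) :
    ∀ n, ∑ h : Hist K C D n, G.playProb δ σ τ n h = 1
  | 0 => by rw [Hist.sum_first_steps]; simpa [playProb] using δ.sum_one
  | n + 1 => by simp only [Hist.sum_succ, sum_playProb_snoc, sum_playProb δ σ τ n]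

def prob (δ : FDist K) (σ : Strategy1 I C) (τ : Strategy2 J D) (n : ℕ)
    (P : Hist K C D n → Prop) : ℝ :=
  ∑ h, if P h then G.playProb δ σ τ n h else 0

theorem val_eq_iSup_prob (δ : FDist K) (σ : Strategy1 I C) (τ : Strategy2 J D) :
    G.val δ σ τ = ⨆ n, G.prob δ σ τ n (·.visits G.T) := rfl

theorem Lval_eq_iSup_prob (𝓛 : Set (Finset K)) (L : Finset K) (δ : FDist K)
    (σ : Strategy1 I C) (τ : Strategy2 J D) :
    G.Lval 𝓛 L δ σ τ = ⨆ n, G.prob δ σ τ n (G.LWin 𝓛 L) := rfl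

variable {G} {δ : FDist K} {σ : Strategy1 I C} {τ : Strategy2 J D}

theorem prob_nonneg (P : Hist K C D n → Prop) : 0 ≤ G.prob δ σ τ n P :=
  Finset.sum_nonneg fun h _ => ite_nonneg (G.playProb_nonneg δ σ τ h) le_rfl

theorem prob_add_prob_not (P : Hist K C D n → Prop) :
    G.prob δ σ τ n P + G.prob δ σ τ n (¬ P ·) = 1 := by
  rw [prob, prob, ← Finset.sum_add_distrib, ← G.sum_playProb δ σ τ n]
  exact Finset.sum_congr rfl fun h _ => by by_cases hP : P h <;> simp [hP]

theorem prob_le_one (P : Hist K C D n → Prop) : G.prob δ σ τ n P ≤ 1 :=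
  (le_add_of_nonneg_right (prob_nonneg _)).trans_eq (prob_add_prob_not P)

theorem prob_mono {P Q : Hist K C D n → Prop}
    (hPQ : ∀ h, 0 < G.playProb δ σ τ n h → P h → Q h) : G.prob δ σ τ n P ≤ G.prob δ σ τ n Q := by
  refine Finset.sum_le_sum fun h _ => ?_
  by_cases hP : P h
  · rcases (G.playProb_nonneg δ σ τ h).eq_or_lt with h0 | h0
    · simp [← h0]
    · simp [hP, hPQ h h0 hP]
  · rw [if_neg hP]
    exact ite_nonneg (G.playProb_nonneg δ σ τ h) le_rfl

theorem bddAbove_range_prob (P : ∀ n, Hist K C D n → Prop) :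
    BddAbove (Set.range fun n => G.prob δ σ τ n (P n)) :=
  ⟨1, by rintro _ ⟨n, rfl⟩; exact prob_le_one _⟩

/-- The factor of `playProb` that does not depend on player 2's strategy
(`playProb_eq_baseProb_mul`). -/
def baseProb (G : Game K I J C D) (δ : FDist K) (σ : Strategy1 I C) : ∀ n, Hist K C D n → ℝ
  | 0, h => δ.f h.first
  | n + 1, h =>
      G.baseProb δ σ n h.init * ((σ h.init.sig1).f (G.act₁ (h.steps (Fin.last n)).1) *
        G.p h.init.last (G.act₁ (h.steps (Fin.last n)).1) (G.act₂ (h.steps (Fin.last n)).2.1)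
          (h.steps (Fin.last n)))

variable {ρ : Strategy2 J D}

theorem baseProb_snoc (w : Hist K C D n) (x : C × D × K) :
    G.baseProb δ σ (n + 1) (w.snoc x) = G.baseProb δ σ n w *
      ((σ w.sig1).f (G.act₁ x.1) * G.p w.last (G.act₁ x.1) (G.act₂ x.2.1) x) := by
  rw [baseProb, Hist.init_snoc, Hist.snoc_steps_last]

theorem baseProb_nonneg (h : Hist K C D n) : 0 ≤ G.baseProb δ σ n h := by
  induction n with
  | zero => exact δ.nonneg _
  | succ n ih => exact mul_nonneg (ih _) (mul_nonneg ((σ _).nonneg _) (G.p_nonneg _ _ _ _))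

theorem playProb_eq_baseProb_mul (h : Hist K C D n) :
    G.playProb δ σ τ n h = G.baseProb δ σ n h * realizationWeight G.act₂ τ h.sig2 := by
  induction n with
  | zero => simp [playProb, baseProb, Hist.sig2]
  | succ n ih =>
    rw [← Hist.snoc_init h, playProb_snoc, baseProb_snoc, Hist.sig2_snoc,
      realizationWeight_append_singleton, ih]
    ring

theorem baseProb_pos_of_playProb_pos {h : Hist K C D n} (hh : 0 < G.playProb δ σ τ n h) :
    0 < G.baseProb δ σ n h := by
  rw [playProb_eq_baseProb_mul] at hh
  exact pos_of_mul_pos_left hh (realizationWeight_nonneg _ _ _)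

theorem mul_prob_le_of_dominates {c : ℝ}
    (hdom : ∀ ds, c * realizationWeight G.act₂ ρ ds ≤ realizationWeight G.act₂ τ ds)
    (P : Hist K C D n → Prop) : c * G.prob δ σ ρ n P ≤ G.prob δ σ τ n P := by
  rw [prob, prob, Finset.mul_sum]
  refine Finset.sum_le_sum fun h _ => ?_
  split_ifs
  · rw [playProb_eq_baseProb_mul, playProb_eq_baseProb_mul, mul_left_comm]
    exact mul_le_mul_of_nonneg_left (hdom _) (baseProb_nonneg h)
  · rw [mul_zero]

theorem iSup_prob_lt_one_of_dominates {c : ℝ} (hc : 0 < c)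
    (hdom : ∀ ds, c * realizationWeight G.act₂ ρ ds ≤ realizationWeight G.act₂ τ ds)
    (P : ∀ n, Hist K C D n → Prop) (hρ : ⨆ n, G.prob δ σ ρ n (P n) < 1) :
    ⨆ n, G.prob δ σ τ n (P n) < 1 := by
  set S := ⨆ n, G.prob δ σ ρ n (P n)
  have hle : ∀ n, G.prob δ σ τ n (P n) ≤ 1 - c * (1 - S) := fun n => by
    have hτ : G.prob δ σ τ n (P n) + G.prob δ σ τ n (¬ P n ·) = 1 := prob_add_prob_not _
    have hρ : G.prob δ σ ρ n (P n) + G.prob δ σ ρ n (¬ P n ·) = 1 := prob_add_prob_not _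
    have hS : G.prob δ σ ρ n (P n) ≤ S := le_ciSup (bddAbove_range_prob P) n
    nlinarith [mul_prob_le_of_dominates (δ := δ) (σ := σ) hdom (¬ P n ·)]
  exact (ciSup_le hle).trans_lt (by nlinarith)

theorem playProb_dirac_of_ne {k : K} {h : Hist K C D n} (hk : h.first ≠ k) :
    G.playProb (dirac k) σ τ n h = 0 := by
  induction n with
  | zero => simp [playProb, dirac, hk]
  | succ n ih => rw [playProb, ih (h := h.init) hk, zero_mul]

theorem playProb_eq_mul_playProb_dirac (h : Hist K C D n) :
    G.playProb δ σ τ n h = δ.f h.first * G.playProb (dirac h.first) σ τ n h := by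
  induction n with
  | zero => simp [playProb, dirac]
  | succ n ih => rw [playProb, playProb, ih, mul_assoc]; rfl

theorem prob_eq_sum_dirac (P : Hist K C D n → Prop) :
    G.prob δ σ τ n P = ∑ k, δ.f k * G.prob (dirac k) σ τ n P := by
  simp only [prob, Finset.mul_sum, mul_ite, mul_zero]
  rw [Finset.sum_comm]
  refine Finset.sum_congr rfl fun h _ => ?_
  split_ifs
  · rw [Fintype.sum_eq_single h.first fun k hk => by rw [playProb_dirac_of_ne hk.symm, mul_zero],
      playProb_eq_mul_playProb_dirac]
  · simp

theorem prob_dirac (k : K) (P : Hist K C D n → Prop) :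
    G.prob (dirac k) σ τ n P =
      ∑ v, if P ⟨k, v⟩ then G.playProb (dirac k) σ τ n ⟨k, v⟩ else 0 := by
  rw [prob, Hist.sum_first_steps, Fintype.sum_eq_single k]
  exact fun k' hk' => Finset.sum_eq_zero fun v _ => by rw [playProb_dirac_of_ne hk', ite_self]

theorem playProb_append (w : Hist K C D t) (v : Fin s → C × D × K) :
    G.playProb δ σ τ (t + s) (w.append v) = G.playProb δ σ τ t w *
      G.playProb (dirac w.last) (fun l => σ (w.sig1 ++ l)) (fun l => τ (w.sig2 ++ l)) s
        ⟨w.last, v⟩ := by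
  induction s with
  | zero => rw [Hist.append_zero]; simp [playProb, dirac]
  | succ s ih =>
    rw [← Fin.snoc_init_self v, Hist.append_snoc]
    show G.playProb δ σ τ (t + s + 1) ((w.append (Fin.init v)).snoc (v (Fin.last s))) = _
    rw [playProb_snoc, ih]
    rw [show (⟨w.last, Fin.snoc (Fin.init v) (v (Fin.last s))⟩ : Hist K C D (s + 1)) =
      Hist.snoc ⟨w.last, Fin.init v⟩ (v (Fin.last s)) from rfl, playProb_snoc, Hist.sig1_append,
      Hist.sig2_append, Hist.last_append]
    ring

theorem prob_not_visits_add (δ : FDist K) (σ : Strategy1 I C) (τ : Strategy2 J D) (t s : ℕ) :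
    G.prob δ σ τ (t + s) (¬ ·.visits G.T) = ∑ w : Hist K C D t,
      if w.visits G.T then 0 else G.playProb δ σ τ t w *
        G.prob (dirac w.last) (fun l => σ (w.sig1 ++ l)) (fun l => τ (w.sig2 ++ l)) s
          (¬ ·.visits G.T) := by
  rw [prob, Hist.sum_append]
  refine Finset.sum_congr rfl fun w _ => ?_
  split_ifs with hw
  · exact Finset.sum_eq_zero fun v _ =>
      if_neg (not_not.2 ((Hist.visits_append w v).2 (.inl hw)))
  · rw [prob_dirac, Finset.mul_sum]
    refine Finset.sum_congr rfl fun v _ => ?_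
    simp only [Hist.visits_append, hw, false_or, playProb_append, mul_ite, mul_zero]

theorem antitone_prob_not_visits :
    Antitone fun n => G.prob δ σ τ n (¬ ·.visits G.T) := antitone_nat_of_succ_le fun n => by
  rw [prob_not_visits_add δ σ τ n 1, prob]
  refine Finset.sum_le_sum fun w _ => ?_
  split_ifs
  · exact le_rfl
  · exact mul_le_of_le_one_right (G.playProb_nonneg δ σ τ w) (prob_le_one _)

theorem prob_dirac_not_visits_of_mem {k : K} (hk : k ∈ G.T) :
    G.prob (dirac k) σ τ n (¬ ·.visits G.T) = 0 :=
  Finset.sum_eq_zero fun h _ => by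
    by_cases hh : h.first = k
    · rw [if_neg (not_not.2 (h.visits_of_first_mem (hh ▸ hk)))]
    · rw [playProb_dirac_of_ne hh, ite_self]

theorem prob_not_visits_le_sum_dirac {L : Finset K} (hδ : ∀ k ∉ L, δ.f k = 0) :
    G.prob δ σ τ n (¬ ·.visits G.T) ≤
      ∑ k ∈ L \ G.T, G.prob (dirac k) σ τ n (¬ ·.visits G.T) := by
  rw [prob_eq_sum_dirac, ← Finset.sum_subset (Finset.subset_univ L) fun k _ hk => by
      rw [hδ k hk, zero_mul],
    Finset.sum_subset Finset.sdiff_subset fun k hkL hk =>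
      prob_dirac_not_visits_of_mem (by simpa [hkL] using hk)]
  exact Finset.sum_le_sum fun k _ => mul_le_of_le_one_left (prob_nonneg _) (δ.f_le_one k)

theorem B1pseq_append_singleton (L : Finset K) (cs : List C) (c : C) :
    G.B1pseq L (cs ++ [c]) = G.B1p (G.B1pseq L cs) c := by
  rw [B1pseq, List.foldl_append]
  rfl

theorem mem_B1 {L : Finset K} {c : C} {k : K} :
    k ∈ G.B1 L c ↔ ∃ l ∈ L, ∃ d, 0 < G.p l (G.act₁ c) (G.act₂ d) (c, d, k) := by
  simp [B1]

/-- Exactness of the pessimistic belief. Positivity is measured by `baseProb`, so the witnesses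
have positive probability under every strategy of player 2 that plays all actions. -/
theorem exists_play_of_mem_B1pseq {L : Finset K} (hδ : ∀ k ∈ L, 0 < δ.f k) (w : Hist K C D n)
    (hw : 0 < G.baseProb δ σ n w) {k : K} (hk : k ∈ G.B1pseq L w.sig1 \ G.T) :
    ∃ w' : Hist K C D n, w'.sig1 = w.sig1 ∧ w'.last = k ∧ ¬ w'.visits G.T ∧
      0 < G.baseProb δ σ n w' := by
  induction n generalizing k with
  | zero =>
    have hnil : ∀ h : Hist K C D 0, h.sig1 = [] :=
      fun h => List.eq_nil_of_length_eq_zero h.length_sig1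
    rw [hnil] at hk ⊢
    obtain ⟨hkL, hkT⟩ := Finset.mem_sdiff.1 hk
    exact ⟨⟨k, Fin.elim0⟩, hnil _, rfl, fun hv => hkT (Hist.visits_zero_iff _ |>.1 hv), hδ k hkL⟩
  | succ n ih =>
    obtain ⟨w₀, ⟨c, d₀, k₀⟩, rfl⟩ : ∃ w₀ x, w₀.snoc x = w := ⟨w.init, _, Hist.snoc_init w⟩
    rw [baseProb_snoc] at hw
    have hw₀ := pos_of_mul_pos_left hw (mul_nonneg ((σ _).nonneg _) (G.p_nonneg _ _ _ _))
    have hσ := pos_of_mul_pos_left (pos_of_mul_pos_right hw (baseProb_nonneg _))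
      (G.p_nonneg _ _ _ _)
    rw [Hist.sig1_snoc, B1pseq_append_singleton, B1p, Finset.mem_sdiff, mem_B1] at hk
    obtain ⟨⟨l, hl, d, hp⟩, hkT⟩ := hk
    obtain ⟨w', hsig, hlast, hvis, hpos⟩ := ih w₀ hw₀ hl
    refine ⟨w'.snoc (c, d, k), by rw [Hist.sig1_snoc, Hist.sig1_snoc, hsig], Hist.last_snoc _ _,
      by rw [Hist.visits_snoc]; exact not_or.2 ⟨hvis, hkT⟩, ?_⟩
    rw [baseProb_snoc, hsig, hlast]
    exact mul_pos hpos (mul_pos hσ hp)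

theorem mul_sum_prob_not_visits_le {S : Finset K} {wit : K → Hist K C D t} {cs : List C}
    {θ : Strategy2 J D} {c : ℝ} (hlast : ∀ k ∈ S, (wit k).last = k)
    (hsig1 : ∀ k ∈ S, (wit k).sig1 = cs) (hsig2 : ∀ k ∈ S, (fun l => τ ((wit k).sig2 ++ l)) = θ)
    (hvis : ∀ k ∈ S, ¬ (wit k).visits G.T) (hc : ∀ k ∈ S, c ≤ G.playProb δ σ τ t (wit k))
    (s : ℕ) :
    c * ∑ k ∈ S, G.prob (dirac k) (fun l => σ (cs ++ l)) θ s (¬ ·.visits G.T) ≤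
      G.prob δ σ τ (t + s) (¬ ·.visits G.T) := by
  rw [prob_not_visits_add, Finset.mul_sum]
  refine le_trans ?_ (Finset.sum_le_sum_of_subset_of_nonneg (Finset.subset_univ (S.image wit))
    fun w _ _ => ?_)
  · rw [Finset.sum_image fun k hk k' hk' h => by rw [← hlast k hk, ← hlast k' hk', h]]
    refine Finset.sum_le_sum fun k hk => ?_
    rw [if_neg (hvis k hk), hlast k hk, hsig1 k hk, hsig2 k hk]
    exact mul_le_mul_of_nonneg_right (hc k hk) (prob_nonneg _)
  · split_ifs
    · exact le_rfl
    · exact mul_nonneg (G.playProb_nonneg _ _ _ _) (prob_nonneg _)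

theorem val_switchStrategy_lt_one [Nonempty J] {L : Finset K} (hδ : ∀ k ∈ L, 0 < δ.f k)
    (w : Hist K C D t) (hw : 0 < G.baseProb δ σ t w) {θ : Strategy2 J D}
    (hne : (G.B1pseq L w.sig1).Nonempty) (hθ : ∀ σ', G.val (uniform _ hne) σ' θ < 1) :
    G.val δ σ (switchStrategy θ t) < 1 := by
  set S := G.B1pseq L w.sig1 \ G.T
  set ρ := switchStrategy θ t
  set σ' : Strategy1 I C := fun l => σ (w.sig1 ++ l)
  have : Nonempty (Hist K C D t) := ⟨w⟩
  choose! wit hsig hlast hvis hpos using fun k (hk : k ∈ S) => exists_play_of_mem_B1pseq hδ w hw hk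
  have hpos' : ∀ k ∈ S, 0 < G.playProb δ σ ρ t (wit k) := fun k hk => by
    rw [playProb_eq_baseProb_mul]
    exact mul_pos (hpos k hk) (realizationWeight_switchStrategy_pos _ _ (by simp))
  obtain ⟨c, hc, hcle⟩ := S.exists_pos_le hpos'
  set Γ := G.val (uniform _ hne) σ' θ
  have hcont : ∀ s, c * (1 - Γ) ≤ G.prob δ σ ρ (t + s) (¬ ·.visits G.T) := fun s => by
    have hΓ : G.prob (uniform _ hne) σ' θ s (·.visits G.T) ≤ Γ :=
      le_ciSup (bddAbove_range_prob fun n => (·.visits G.T)) s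
    have hsplit : G.prob (uniform _ hne) σ' θ s (·.visits G.T) +
        G.prob (uniform _ hne) σ' θ s (¬ ·.visits G.T) = 1 := prob_add_prob_not _
    have hsum : G.prob (uniform _ hne) σ' θ s (¬ ·.visits G.T) ≤
        ∑ k ∈ S, G.prob (dirac k) σ' θ s (¬ ·.visits G.T) :=
      prob_not_visits_le_sum_dirac fun k hk => uniform_f_of_notMem hne hk
    refine le_trans ?_ (mul_sum_prob_not_visits_le hlast hsig
      (fun k _ => switchStrategy_append θ (wit k).length_sig2) hvis hcle s)
    exact mul_le_mul_of_nonneg_left (by linarith) hc.le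
  have hreach : ∀ n, G.prob δ σ ρ n (·.visits G.T) ≤ 1 - c * (1 - Γ) := fun n => by
    have hsplit : G.prob δ σ ρ n (·.visits G.T) + G.prob δ σ ρ n (¬ ·.visits G.T) = 1 :=
      prob_add_prob_not _
    have hmono : G.prob δ σ ρ (t + n) (¬ ·.visits G.T) ≤ G.prob δ σ ρ n (¬ ·.visits G.T) :=
      antitone_prob_not_visits (Nat.le_add_left n t)
    linarith [hcont n]
  rw [val_eq_iSup_prob]
  exact (ciSup_le hreach).trans_lt (by nlinarith [hθ σ'])

theorem val_le_Lval {𝓛 : Set (Finset K)} {L : Finset K}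
    (H : ∀ t (w : Hist K C D (t + 1)), 0 < G.baseProb δ σ (t + 1) w → G.B1pseq L w.sig1 ∉ 𝓛)
    (τ : Strategy2 J D) : G.val δ σ τ ≤ G.Lval 𝓛 L δ σ τ := by
  rw [val_eq_iSup_prob, Lval_eq_iSup_prob]
  refine ciSup_mono (bddAbove_range_prob _) fun n =>
    prob_mono fun h hh ⟨m, hm⟩ => ⟨m, hm, fun r hr1 hrm => ?_⟩
  obtain ⟨t, rfl⟩ : ∃ t, r = t + 1 := ⟨r - 1, by omega⟩
  obtain ⟨s, rfl⟩ : ∃ s, n = t + 1 + s := ⟨n - (t + 1), by have := m.isLt; omega⟩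
  obtain ⟨w, v, rfl⟩ : ∃ w v, Hist.append w v = h :=
    ⟨_, _, (Hist.appendEquiv K C D (t + 1) s).apply_symm_apply h⟩
  rw [Hist.sig1_append, List.take_left' w.length_sig1]
  rw [playProb_append] at hh
  exact H t w <| baseProb_pos_of_playProb_pos <|
    pos_of_mul_pos_left hh (G.playProb_nonneg _ _ _ _)

end Game

variable {K I J C D : Type*} [Fintype K] [Fintype I] [Fintype J] [Fintype C] [Fintype D]
  [Nonempty K] [Nonempty I] [Nonempty J] [Nonempty C] [Nonempty D]

/-- if `𝓛` is upward-closed and every support in `𝓛` is positively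
winning for player 2 in the original game, then every support positively winning
for player 2 in the `𝓛`-game is positively winning for player 2 in the original
game. -/
theorem Lgame_positive2_implies_positive2 (G : Game K I J C D) (𝓛 : Set (Finset K))
    (hup : ∀ L ∈ 𝓛, ∀ L' : Finset K, L ⊆ L' → L' ∈ 𝓛)
    (hpos : ∀ L ∈ 𝓛, ∀ hL : L.Nonempty, G.PositiveWin2 (uniform L hL)) :
    ∀ (L : Finset K) (hL : L.Nonempty),
      (∃ τ, ∀ σ, G.Lval 𝓛 L (uniform L hL) σ τ < 1) →
      G.PositiveWin2 (uniform L hL) := by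
  rintro L hL ⟨τ₀, hτ₀⟩
  by_cases hempty : ∅ ∈ 𝓛
  · exact hpos L (hup ∅ hempty L (Finset.empty_subset L)) hL
  have : Nonempty (Strategy2 J D) := ⟨τ₀⟩
  choose! θ hθ using fun L' (h : L' ∈ 𝓛 ∧ L'.Nonempty) => hpos L' h.1 h.2
  obtain ⟨τ, hτ⟩ := exists_strategy_dominating G.act₂ fun i : Option (Finset K × ℕ) =>
    i.elim τ₀ fun p => switchStrategy (θ p.1) p.2
  refine ⟨τ, fun σ => ?_⟩
  by_cases hbel : ∃ t, ∃ w : Hist K C D (t + 1),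
      0 < G.baseProb (uniform L hL) σ (t + 1) w ∧ G.B1pseq L w.sig1 ∈ 𝓛
  · obtain ⟨t, w, hw, h𝓛⟩ := hbel
    have hne : (G.B1pseq L w.sig1).Nonempty :=
      Finset.nonempty_iff_ne_empty.2 fun h => hempty (h ▸ h𝓛)
    obtain ⟨c, hc, hdom⟩ := hτ (some (G.B1pseq L w.sig1, t + 1))
    exact Game.iSup_prob_lt_one_of_dominates hc hdom _ <|
      Game.val_switchStrategy_lt_one (fun _ => uniform_f_pos hL) w hw hne (hθ _ ⟨h𝓛, hne⟩)
  · simp only [not_exists, not_and] at hbel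
    obtain ⟨c, hc, hdom⟩ := hτ none
    exact (Game.val_le_Lval hbel τ).trans_lt
      (Game.iSup_prob_lt_one_of_dominates hc hdom _ (hτ₀ σ))
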